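/- arXiv:2105.14617 — 2 statements merged into one kernel-verified Lean document; each statement's English description precedes it below -/
import Mathlib

section
/- There do not exist integers a, b, c satisfying simultaneously: 2a + 7b + c = 0; 5b² − ac ∈ {0, 1}; and 5(1+b)² − (3−a)(1−c) ∈ {0, 1}. -/
/-- Diophantine statement ruling out the degree d = 5 wall case: there are no
integers a, b, c with 2a + 7b + c = 0, 5b² − ac ∈ {0, 1}, and
5(1+b)² − (3−a)(1−c) ∈ {0, 1}. -/
theorem stmt_4 :
    ¬ ∃ a b c : ℤ, 2 * a + 7 * b + c = 0 ∧
      (5 * b ^ 2 - a * c = 0 ∨ 5 * b ^ 2 - a * c = 1) ∧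
      (5 * (1 + b) ^ 2 - (3 - a) * (1 - c) = 0 ∨
        5 * (1 + b) ^ 2 - (3 - a) * (1 - c) = 1) := by
  rintro ⟨a, b, c, h1, h2, h3⟩
  have hc : c = -2 * a - 7 * b := by omega
  subst hc
  have e2 : 5 * b ^ 2 - a * (-2 * a - 7 * b) = (2 * a + 5 * b) * (a + b) := by ring
  have e3 : 5 * (1 + b) ^ 2 - (3 - a) * (1 - (-2 * a - 7 * b)) =
      (2 * a + 5 * b) * (a + b) - (5 * a + 11 * b) + 2 := by ring
  rw [e2] at h2
  rw [e3] at h3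
  rcases h2 with h2 | h2
  · rcases mul_eq_zero.mp h2 with h | h <;> rw [h2] at h3 <;> omega
  · rcases Int.eq_one_or_neg_one_of_mul_eq_one' h2 with ⟨h, h'⟩ | ⟨h, h'⟩ <;> omega
end

section
/- Let (a₁, b₁, c₁) and (a₂, b₂, c₂) be triples of integers such that for each i ∈ {1,2} one has 2aᵢ + 5bᵢ + cᵢ = 0 and 3bᵢ² = aᵢcᵢ. If (a₁ + a₂, b₁ + b₂, c₁ + c₂) equals (2, −1, 1) or (4, −3, 7), then (aᵢ, bᵢ, cᵢ) = (3, −2, 4) for some i ∈ {1,2}. -/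
/-- Diophantine statement behind ruling out the degree d = 3 strictly semistable
wall cases: if two integer triples each satisfy 2a + 5b + c = 0 and 3b² = ac, and
their sum is (2, −1, 1) or (4, −3, 7), then one of them equals (3, −2, 4). -/
theorem stmt_12 (a₁ b₁ c₁ a₂ b₂ c₂ : ℤ)
    (h₁ : 2 * a₁ + 5 * b₁ + c₁ = 0) (h₁' : 3 * b₁ ^ 2 = a₁ * c₁)
    (h₂ : 2 * a₂ + 5 * b₂ + c₂ = 0) (h₂' : 3 * b₂ ^ 2 = a₂ * c₂)
    (hsum : (a₁ + a₂, b₁ + b₂, c₁ + c₂) = (2, -1, 1) ∨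
      (a₁ + a₂, b₁ + b₂, c₁ + c₂) = (4, -3, 7)) :
    (a₁, b₁, c₁) = (3, -2, 4) ∨ (a₂, b₂, c₂) = (3, -2, 4) := by
  have k₁ : (a₁ + b₁) * (2 * a₁ + 3 * b₁) = 0 := by linear_combination a₁ * h₁ + h₁'
  have k₂ : (a₂ + b₂) * (2 * a₂ + 3 * b₂) = 0 := by linear_combination a₂ * h₂ + h₂'
  simp only [Prod.mk.injEq] at hsum ⊢
  rcases mul_eq_zero.mp k₁ with p₁ | p₁ <;> rcases mul_eq_zero.mp k₂ with p₂ | p₂ <;>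
    rcases hsum with ⟨u, v, w⟩ | ⟨u, v, w⟩ <;> omega
end
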